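/- If f : H_n → H_n is a linear commuting map and the decomposition f(X) = {X,A} + X^τ B + C X^τ + ζ(X) holds with A ∈ C_n, B, C ∈ P_n fixed, then the map ζ(X) := f(X) − {X,A} − X^τ B − C X^τ is additive and takes values in the center Z(H_n) = F·e_{1,n}. -/

import Mathlib

open Matrix

/-- `X` belongs to the Heisenberg algebra `H_n`: its only possibly nonzero entries lie
in the first row strictly above the diagonal or the last column strictly above the diagonal
(0-based indices: row 0 with column ≠ 0, or column `n-1` with row ≠ `n-1`). -/
def IsHeis {n : ℕ} {F : Type*} [Field F] (X : Matrix (Fin n) (Fin n) F) : Prop :=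
  ∀ i j : Fin n, ¬ ((i.val = 0 ∧ j.val ≠ 0) ∨ (j.val = n - 1 ∧ i.val ≠ n - 1)) → X i j = 0

/-- Anti-transpose: `(antiT X) i j = X (rev j) (rev i)`. -/
def antiT {n : ℕ} {F : Type*} [Field F] (X : Matrix (Fin n) (Fin n) F) :
    Matrix (Fin n) (Fin n) F :=
  Matrix.of fun i j => X j.rev i.rev

/-- `A ∈ C_n`: first and last rows and columns of `A` are zero. -/
def IsC {n : ℕ} {F : Type*} [Field F] (A : Matrix (Fin n) (Fin n) F) : Prop :=
  ∀ i j : Fin n, (i.val = 0 ∨ i.val = n - 1 ∨ j.val = 0 ∨ j.val = n - 1) → A i j = 0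

/-- `A ∈ P_n`: hollow skew-persymmetric matrices in `C_n`. -/
def IsP {n : ℕ} {F : Type*} [Field F] (A : Matrix (Fin n) (Fin n) F) : Prop :=
  IsC A ∧ (∀ i j : Fin n, antiT A i j = - A i j) ∧ (∀ i : Fin n, A i i.rev = 0)

/-! Linearizing `f X * X = X * f X` and evaluating it against the matrix units `e_{k,n}` and
`e_{1,i}` at the corner entry `(1, n)` expresses the first row and the last column of `f X`
through the corner entries of products of `X` with `f e_{k,n}` and `f e_{1,i}`. The matrices
`A`, `B`, `C` are assembled from exactly these images, so `X A` and `X^τ B` reproduce the first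
row and `A X` and `C X^τ` the last column; that one matrix `A` serves both is the symmetry
`f(e_{1,i})_{1,k} = f(e_{k,n})_{i,n}`, again a consequence of commutativity. Everywhere else
`f X` and all four correction terms vanish since `A, B, C ∈ C_n`, leaving only the corner.

Indices are 0-based: the paper's row `1` and column `n` are `o` and `l` below, with values `0`
and `n - 1`. -/

section Heisenberg

variable {n : ℕ} {F : Type*} [Field F]

theorem IsHeis.add {X Y : Matrix (Fin n) (Fin n) F} (hX : IsHeis X) (hY : IsHeis Y) :
    IsHeis (X + Y) := fun i j h => by
  simp [hX i j h, hY i j h]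

theorem isHeis_antiT {X : Matrix (Fin n) (Fin n) F} (hX : IsHeis X) : IsHeis (antiT X) := by
  intro i j h
  refine hX j.rev i.rev fun hc => h ?_
  have := Fin.val_rev i; have := Fin.val_rev j; have := i.isLt; have := j.isLt
  omega

theorem antiT_add (X Y : Matrix (Fin n) (Fin n) F) : antiT (X + Y) = antiT X + antiT Y := rfl

theorem isHeis_single_of_val_eq_last {k l : Fin n} (hl : l.val = n - 1) (hk : k.val ≠ n - 1)
    (c : F) : IsHeis (single k l c) := by
  intro i j h
  simp only [single, of_apply, ite_eq_right_iff]
  rintro ⟨rfl, rfl⟩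
  exact absurd (Or.inr ⟨hl, hk⟩) h

theorem isHeis_single_of_val_eq_zero {o i : Fin n} (ho : o.val = 0) (hi : i.val ≠ 0) (c : F) :
    IsHeis (single o i c) := by
  intro a b h
  simp only [single, of_apply, ite_eq_right_iff]
  rintro ⟨rfl, rfl⟩
  exact absurd (Or.inl ⟨ho, hi⟩) h

theorem IsHeis.mul_isC_apply_eq_zero {X P : Matrix (Fin n) (Fin n) F} (hX : IsHeis X)
    (hP : IsC P) {i j : Fin n} (h : i.val ≠ 0 ∨ j.val = 0 ∨ j.val = n - 1) : (X * P) i j = 0 := by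
  rw [mul_apply]
  refine Finset.sum_eq_zero fun m _ => ?_
  by_cases hm : m.val = 0 ∨ m.val = n - 1
  · rw [hP m j (by tauto), mul_zero]
  · rcases h with h | h
    · rw [hX i m (by omega), zero_mul]
    · rw [hP m j (by tauto), mul_zero]

theorem IsC.mul_isHeis_apply_eq_zero {P X : Matrix (Fin n) (Fin n) F} (hP : IsC P)
    (hX : IsHeis X) {i j : Fin n} (h : j.val ≠ n - 1 ∨ i.val = 0 ∨ i.val = n - 1) :
    (P * X) i j = 0 := by
  rw [mul_apply]
  refine Finset.sum_eq_zero fun m _ => ?_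
  by_cases hm : m.val = 0 ∨ m.val = n - 1
  · rw [hP i m (by tauto), zero_mul]
  · rcases h with h | h
    · rw [hX m j (by omega), mul_zero]
    · rw [hP i m (by tauto), zero_mul]

theorem Fin.sum_eq_sum_of_eq_on_interior {M : Type*} [AddCommMonoid M] {g h : Fin n → M}
    (hg : ∀ m : Fin n, m.val = 0 ∨ m.val = n - 1 → g m = 0)
    (hh : ∀ m : Fin n, m.val = 0 ∨ m.val = n - 1 → h m = 0)
    (hgh : ∀ m : Fin n, 1 ≤ m.val → m.val ≤ n - 2 → g m = h m) : ∑ m, g m = ∑ m, h m := by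
  refine Finset.sum_congr rfl fun m _ => ?_
  by_cases hm : m.val = 0 ∨ m.val = n - 1
  · rw [hg m hm, hh m hm]
  · exact hgh m (by omega) (by omega)

end Heisenberg

section Products

variable {n : ℕ} {F : Type*} [Field F] {o l : Fin n}

theorem IsHeis.mul_apply_eq_of_col_eq {X A M : Matrix (Fin n) (Fin n) F} (hX : IsHeis X)
    (hA : IsC A) (hM : IsHeis M) (ho : o.val = 0) (hl : l.val = n - 1) {j : Fin n}
    (hAM : ∀ m : Fin n, 1 ≤ m.val → m.val ≤ n - 2 → A m j = M m l) :
    (X * A) o j = (X * M) o l := by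
  rw [mul_apply, mul_apply]
  refine Fin.sum_eq_sum_of_eq_on_interior (fun m hm => by rw [hA m j (by tauto), mul_zero])
    (fun m hm => ?_) (fun m h₁ h₂ => by rw [hAM m h₁ h₂])
  rcases hm with hm | hm
  · rw [hX o m (by omega), zero_mul]
  · rw [hM m l (by omega), mul_zero]

theorem IsC.mul_apply_eq_of_row_eq {A X M : Matrix (Fin n) (Fin n) F} (hA : IsC A)
    (hX : IsHeis X) (hM : IsHeis M) (ho : o.val = 0) (hl : l.val = n - 1) {i : Fin n}
    (hAM : ∀ m : Fin n, 1 ≤ m.val → m.val ≤ n - 2 → A i m = M o m) :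
    (A * X) i l = (M * X) o l := by
  rw [mul_apply, mul_apply]
  refine Fin.sum_eq_sum_of_eq_on_interior (fun m hm => by rw [hA i m (by tauto), zero_mul])
    (fun m hm => ?_) (fun m h₁ h₂ => by rw [hAM m h₁ h₂])
  rcases hm with hm | hm
  · rw [hM o m (by omega), zero_mul]
  · rw [hX m l (by omega), mul_zero]

theorem IsHeis.antiT_mul_apply_eq_of_col_eq {X B M : Matrix (Fin n) (Fin n) F} (hX : IsHeis X)
    (hB : IsC B) (hM : IsHeis M) (ho : o.val = 0) (hl : l.val = n - 1) {j : Fin n}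
    (hBM : ∀ m : Fin n, 1 ≤ m.val → m.val ≤ n - 2 → B m j = -M o m.rev) :
    (antiT X * B) o j = -(M * X) o l := by
  have hrev : o.rev = l := Fin.ext (by rw [Fin.val_rev]; omega)
  calc (antiT X * B) o j = ∑ m, X m l * B m.rev j := by
        rw [mul_apply, ← Equiv.sum_comp Fin.revPerm]
        simp [antiT, hrev]
    _ = ∑ m, -(M o m * X m l) := by
        refine Fin.sum_eq_sum_of_eq_on_interior (fun m hm => ?_) (fun m hm => ?_)
          (fun m h₁ h₂ => ?_) <;> have := Fin.val_rev m <;> have := m.isLt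
        · rw [hB m.rev j (by omega), mul_zero]
        · rcases hm with hm | hm
          · rw [hM o m (by omega), zero_mul, neg_zero]
          · rw [hX m l (by omega), mul_zero, neg_zero]
        · rw [hBM m.rev (by omega) (by omega), Fin.rev_rev, mul_neg, mul_comm]
    _ = -(M * X) o l := by rw [mul_apply, Finset.sum_neg_distrib]

theorem IsC.mul_antiT_apply_eq_of_row_eq {C X M : Matrix (Fin n) (Fin n) F} (hC : IsC C)
    (hX : IsHeis X) (hM : IsHeis M) (ho : o.val = 0) (hl : l.val = n - 1) {i : Fin n}
    (hCM : ∀ m : Fin n, 1 ≤ m.val → m.val ≤ n - 2 → C i m = -M m.rev l) :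
    (C * antiT X) i l = -(X * M) o l := by
  have hrev : l.rev = o := Fin.ext (by rw [Fin.val_rev]; omega)
  calc (C * antiT X) i l = ∑ m, C i m.rev * X o m := by
        rw [mul_apply, ← Equiv.sum_comp Fin.revPerm]
        simp [antiT, hrev]
    _ = ∑ m, -(X o m * M m l) := by
        refine Fin.sum_eq_sum_of_eq_on_interior (fun m hm => ?_) (fun m hm => ?_)
          (fun m h₁ h₂ => ?_) <;> have := Fin.val_rev m <;> have := m.isLt
        · rw [hC i m.rev (by omega), zero_mul]
        · rcases hm with hm | hm
          · rw [hX o m (by omega), zero_mul, neg_zero]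
          · rw [hM m l (by omega), mul_zero, neg_zero]
        · rw [hCM m.rev (by omega) (by omega), Fin.rev_rev, neg_mul, mul_comm]
    _ = -(X * M) o l := by rw [mul_apply, Finset.sum_neg_distrib]

end Products

theorem mul_add_mul_eq_of_commute_add {R : Type*} [NonUnitalNonAssocRing R] {a b x y : R}
    (hx : Commute a x) (hy : Commute b y) (hxy : Commute (a + b) (x + y)) :
    a * y + b * x = y * a + x * b := by
  have h := hxy.eq
  rw [add_mul, mul_add, mul_add, mul_add, add_mul, add_mul, hx.eq, hy.eq] at h
  have h' : x * a + y * b + (a * y + b * x) = x * a + y * b + (y * a + x * b) := by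
    rw [← sub_eq_zero] at h ⊢
    rw [← h]
    abel
  exact add_left_cancel h'

theorem Matrix.eq_smul_single_of_apply_eq_zero {m n α : Type*} [DecidableEq m] [DecidableEq n]
    [MulZeroOneClass α] {M : Matrix m n α} {o : m} {l : n}
    (h : ∀ i j, ¬(i = o ∧ j = l) → M i j = 0) : M = M o l • single o l 1 := by
  ext i j
  by_cases hij : i = o ∧ j = l
  · obtain ⟨rfl, rfl⟩ := hij
    simp
  · simp [h i j hij, single_apply_of_ne o l (1 : α) i j (by tauto)]

section Commuting

variable {n : ℕ} {F : Type*} [Field F] {f : Matrix (Fin n) (Fin n) F → Matrix (Fin n) (Fin n) F}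
  {o l : Fin n}

theorem apply_first_row_of_commuting
    (hlin : ∀ X Y, IsHeis X → IsHeis Y → f X * Y + f Y * X = Y * f X + X * f Y)
    {X : Matrix (Fin n) (Fin n) F} (hX : IsHeis X) (ho : o.val = 0) (hl : l.val = n - 1)
    {k : Fin n} (hk₀ : k.val ≠ 0) (hkl : k.val ≠ n - 1) :
    f X o k = (X * f (single k l 1)) o l - (f (single k l 1) * X) o l := by
  have h := congrFun₂ (hlin X _ hX (isHeis_single_of_val_eq_last hl hkl 1)) o l
  rw [Matrix.add_apply, Matrix.add_apply, mul_single_apply_same,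
    single_mul_apply_of_ne _ _ _ _ _ (Fin.ne_of_val_ne (by omega))] at h
  linear_combination h

theorem apply_last_col_of_commuting
    (hlin : ∀ X Y, IsHeis X → IsHeis Y → f X * Y + f Y * X = Y * f X + X * f Y)
    {X : Matrix (Fin n) (Fin n) F} (hX : IsHeis X) (ho : o.val = 0) (hl : l.val = n - 1)
    {i : Fin n} (hi₀ : i.val ≠ 0) (hil : i.val ≠ n - 1) :
    f X i l = (f (single o i 1) * X) o l - (X * f (single o i 1)) o l := by
  have h := congrFun₂ (hlin X _ hX (isHeis_single_of_val_eq_zero ho hi₀ 1)) o l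
  rw [Matrix.add_apply, Matrix.add_apply, mul_single_apply_of_ne _ _ _ _ _ (Fin.ne_of_val_ne (by omega)),
    single_mul_apply_same] at h
  linear_combination -h

theorem single_apply_first_row_of_commuting
    (hlin : ∀ X Y, IsHeis X → IsHeis Y → f X * Y + f Y * X = Y * f X + X * f Y)
    (ho : o.val = 0) (hl : l.val = n - 1) {i k : Fin n} (hi₀ : i.val ≠ 0) (hil : i.val ≠ n - 1)
    (hk₀ : k.val ≠ 0) (hkl : k.val ≠ n - 1) :
    f (single o i 1) o k = f (single k l 1) i l := by
  rw [apply_first_row_of_commuting hlin (isHeis_single_of_val_eq_zero ho hi₀ 1) ho hl hk₀ hkl,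
    single_mul_apply_same, mul_single_apply_of_ne _ _ _ _ _ (Fin.ne_of_val_ne (by omega)),
    one_mul, sub_zero]

theorem residual_apply_of_not_isHeis_pos {X Y A B C : Matrix (Fin n) (Fin n) F} (hX : IsHeis X)
    (hY : IsHeis Y) (hA : IsC A) (hB : IsC B) (hC : IsC C) {i j : Fin n}
    (hij : ¬((i.val = 0 ∧ j.val ≠ 0) ∨ (j.val = n - 1 ∧ i.val ≠ n - 1))) :
    (Y - (X * A + A * X) - antiT X * B - C * antiT X) i j = 0 := by
  have hi : i.val ≠ 0 ∨ j.val = 0 ∨ j.val = n - 1 := by omega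
  have hj : j.val ≠ n - 1 ∨ i.val = 0 ∨ i.val = n - 1 := by omega
  rw [Matrix.sub_apply, Matrix.sub_apply, Matrix.sub_apply, Matrix.add_apply, hY i j hij, hX.mul_isC_apply_eq_zero hA hi,
    hA.mul_isHeis_apply_eq_zero hX hj, (isHeis_antiT hX).mul_isC_apply_eq_zero hB hi,
    hC.mul_isHeis_apply_eq_zero (isHeis_antiT hX) hj]
  simp

theorem residual_apply_first_row
    (hlin : ∀ X Y, IsHeis X → IsHeis Y → f X * Y + f Y * X = Y * f X + X * f Y)
    (hmaps : ∀ X, IsHeis X → IsHeis (f X)) {X A B C : Matrix (Fin n) (Fin n) F}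
    (hX : IsHeis X) (hA : IsC A) (hB : IsC B) (hC : IsC C) (ho : o.val = 0)
    (hl : l.val = n - 1) {j : Fin n} (hj₀ : j.val ≠ 0) (hjl : j.val ≠ n - 1)
    (hAj : ∀ m : Fin n, 1 ≤ m.val → m.val ≤ n - 2 → A m j = f (single j l 1) m l)
    (hBj : ∀ m : Fin n, 1 ≤ m.val → m.val ≤ n - 2 → B m j = -f (single j l 1) o m.rev) :
    (f X - (X * A + A * X) - antiT X * B - C * antiT X) o j = 0 := by
  have hE := hmaps _ (isHeis_single_of_val_eq_last hl hjl 1)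
  rw [Matrix.sub_apply, Matrix.sub_apply, Matrix.sub_apply, Matrix.add_apply,
    apply_first_row_of_commuting hlin hX ho hl hj₀ hjl,
    hX.mul_apply_eq_of_col_eq hA hE ho hl hAj,
    hA.mul_isHeis_apply_eq_zero hX (Or.inr (Or.inl ho)),
    hX.antiT_mul_apply_eq_of_col_eq hB hE ho hl hBj,
    hC.mul_isHeis_apply_eq_zero (isHeis_antiT hX) (Or.inr (Or.inl ho))]
  ring

theorem residual_apply_last_col
    (hlin : ∀ X Y, IsHeis X → IsHeis Y → f X * Y + f Y * X = Y * f X + X * f Y)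
    (hmaps : ∀ X, IsHeis X → IsHeis (f X)) {X A B C : Matrix (Fin n) (Fin n) F}
    (hX : IsHeis X) (hA : IsC A) (hB : IsC B) (hC : IsC C) (ho : o.val = 0)
    (hl : l.val = n - 1) {i : Fin n} (hi₀ : i.val ≠ 0) (hil : i.val ≠ n - 1)
    (hAi : ∀ m : Fin n, 1 ≤ m.val → m.val ≤ n - 2 → A i m = f (single m l 1) i l)
    (hCi : ∀ m : Fin n, 1 ≤ m.val → m.val ≤ n - 2 → C i m = -f (single o i 1) m.rev l) :
    (f X - (X * A + A * X) - antiT X * B - C * antiT X) i l = 0 := by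
  have hG := hmaps _ (isHeis_single_of_val_eq_zero ho hi₀ 1)
  have hAi' (m : Fin n) (h₁ : 1 ≤ m.val) (h₂ : m.val ≤ n - 2) : A i m = f (single o i 1) o m :=
    (hAi m h₁ h₂).trans
      (single_apply_first_row_of_commuting hlin ho hl hi₀ hil (by omega) (by omega)).symm
  rw [Matrix.sub_apply, Matrix.sub_apply, Matrix.sub_apply, Matrix.add_apply,
    apply_last_col_of_commuting hlin hX ho hl hi₀ hil,
    hX.mul_isC_apply_eq_zero hA (Or.inr (Or.inr hl)),
    hA.mul_apply_eq_of_row_eq hX hG ho hl hAi',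
    (isHeis_antiT hX).mul_isC_apply_eq_zero hB (Or.inr (Or.inr hl)),
    hC.mul_antiT_apply_eq_of_row_eq hX hG ho hl hCi]
  ring

end Commuting

theorem stmt18 {n : ℕ} (hn : 3 ≤ n) {F : Type*} [Field F]
    (f : Matrix (Fin n) (Fin n) F → Matrix (Fin n) (Fin n) F)
    (hmaps : ∀ X, IsHeis X → IsHeis (f X))
    (hadd : ∀ X Y, IsHeis X → IsHeis Y → f (X + Y) = f X + f Y)
    (hcomm : ∀ X, IsHeis X → f X * X = X * f X)
    (A B C : Matrix (Fin n) (Fin n) F)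
    (hA : ∀ i j : Fin n, A i j =
      if 1 ≤ i.val ∧ i.val ≤ n - 2 ∧ 1 ≤ j.val ∧ j.val ≤ n - 2 then
        f (Matrix.single j ⟨n - 1, by omega⟩ (1 : F)) i ⟨n - 1, by omega⟩
      else 0)
    (hB : ∀ i j : Fin n, B i j =
      if 1 ≤ i.val ∧ i.val ≤ n - 2 ∧ 1 ≤ j.val ∧ j.val ≤ n - 2 then
        - f (Matrix.single j ⟨n - 1, by omega⟩ (1 : F)) ⟨0, by omega⟩ i.rev
      else 0)
    (hC : ∀ i j : Fin n, C i j =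
      if 1 ≤ i.val ∧ i.val ≤ n - 2 ∧ 1 ≤ j.val ∧ j.val ≤ n - 2 then
        - f (Matrix.single ⟨0, by omega⟩ i (1 : F)) j.rev ⟨n - 1, by omega⟩
      else 0)
    (hAC : IsC A) (hBP : IsP B) (hCP : IsP C)
    (ζ : Matrix (Fin n) (Fin n) F → Matrix (Fin n) (Fin n) F)
    (hζ : ∀ X, ζ X = f X - (X * A + A * X) - antiT X * B - C * antiT X) :
    (∀ X Y, IsHeis X → IsHeis Y → ζ (X + Y) = ζ X + ζ Y) ∧
    (∀ X, IsHeis X →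
      ∃ a : F, ζ X = a • Matrix.single ⟨0, by omega⟩ ⟨n - 1, by omega⟩ (1 : F)) := by
  set o : Fin n := ⟨0, by omega⟩
  set l : Fin n := ⟨n - 1, by omega⟩
  have hlin (X Y) (hX : IsHeis X) (hY : IsHeis Y) :
      f X * Y + f Y * X = Y * f X + X * f Y :=
    mul_add_mul_eq_of_commute_add (hcomm X hX) (hcomm Y hY)
      (hadd X Y hX hY ▸ hcomm _ (hX.add hY))
  refine ⟨fun X Y hX hY => ?_, fun X hX => ⟨ζ X o l, ?_⟩⟩
  · rw [hζ, hζ, hζ, hadd X Y hX hY, antiT_add]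
    simp only [add_mul, mul_add]
    abel
  rw [hζ]
  refine eq_smul_single_of_apply_eq_zero fun i j hij => ?_
  by_cases hpos : (i.val = 0 ∧ j.val ≠ 0) ∨ (j.val = n - 1 ∧ i.val ≠ n - 1)
  · rcases hpos with ⟨hi, hj⟩ | ⟨hj, hi⟩
    · obtain rfl : i = o := Fin.ext hi
      have hjl : j.val ≠ n - 1 := fun h => hij ⟨rfl, Fin.ext h⟩
      exact residual_apply_first_row hlin hmaps hX hAC hBP.1 hCP.1 rfl rfl hj hjl
        (fun m h₁ h₂ => (hA m j).trans (if_pos ⟨h₁, h₂, by omega, by omega⟩))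
        (fun m h₁ h₂ => (hB m j).trans (if_pos ⟨h₁, h₂, by omega, by omega⟩))
    · obtain rfl : j = l := Fin.ext hj
      have hi₀ : i.val ≠ 0 := fun h => hij ⟨Fin.ext h, rfl⟩
      exact residual_apply_last_col hlin hmaps hX hAC hBP.1 hCP.1 rfl rfl hi₀ hi
        (fun m h₁ h₂ => (hA i m).trans (if_pos ⟨by omega, by omega, h₁, h₂⟩))
        (fun m h₁ h₂ => (hC i m).trans (if_pos ⟨by omega, by omega, h₁, h₂⟩))
  · exact residual_apply_of_not_isHeis_pos hX (hmaps X hX) hAC hBP.1 hCP.1 hpos
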